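/- Let R be a PID with field of fractions K. Then K^n is dense in the affine adele space A_R^n, the restricted direct product of the spaces K_p^n with respect to the subsets R_p^n over all nonzero primes p of R, where K^n embeds diagonally. -/

import Mathlib

open IsDedekindDomain

section Aux

open IsDedekindDomain.HeightOneSpectrum WithZero

variable (R : Type*) [CommRing R] [IsDomain R] [IsPrincipalIdealRing R]
    (K : Type*) [Field K] [Algebra R K] [IsFractionRing R K]

theorem approx_in_completion (v : HeightOneSpectrum R) (c : v.adicCompletion K)
    (hc : Valued.v c ≤ 1) (s : R) (hs : s ≠ 0) :
    ∃ t : R, Valued.v (c - algebraMap R (v.adicCompletion K) t) < v.intValuation s := by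
  have hsv : Valued.v (algebraMap R (v.adicCompletion K) s) = v.intValuation s := by
    rw [valuedAdicCompletion_eq_valuation, valuation_of_algebraMap]
  have hsne : v.intValuation s ≠ 0 := v.intValuation_ne_zero s hs
  have hsne' : (Valued.v : Valuation (v.adicCompletion K) ℤᵐ⁰).restrict
      (algebraMap R (v.adicCompletion K) s) ≠ 0 := by
    intro h
    apply hsne
    rw [← hsv, ← Valuation.embedding_restrict, h, map_zero]
  have hU : {y : v.adicCompletion K | Valued.v (y - c) < v.intValuation s} ∈ nhds c := by
    rw [Valued.mem_nhds]
    refine ⟨Units.mk0 _ hsne', fun y hy => ?_⟩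
    have hy' : (Valued.v : Valuation (v.adicCompletion K) ℤᵐ⁰).restrict (y - c)
        < (Valued.v : Valuation (v.adicCompletion K) ℤᵐ⁰).restrict
          (algebraMap R (v.adicCompletion K) s) := hy
    rw [Valuation.restrict_lt_iff, hsv] at hy'
    exact hy'
  obtain ⟨x, hx1, y, rfl⟩ :=
    mem_closure_iff_nhds.mp (denseRange_algebraMap (K := K) (v := v) c) _ hU
  have hcoe : ∀ z : K, algebraMap K (v.adicCompletion K) z = (z : v.adicCompletion K) :=
    fun z => rfl
  have hyc : Valued.v (algebraMap K (v.adicCompletion K) y - c) < v.intValuation s := hx1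
  have hyval : Valued.v (algebraMap K (v.adicCompletion K) y) ≤ 1 := by
    have h1 := Valuation.map_add Valued.v (algebraMap K (v.adicCompletion K) y - c) c
    rw [sub_add_cancel] at h1
    exact h1.trans (max_le ((le_of_lt hyc).trans (v.intValuation_le_one s)) hc)
  have hyval' : v.valuation K y ≤ 1 := by
    rwa [hcoe, valuedAdicCompletion_eq_valuation'] at hyval
  obtain ⟨t, ht⟩ := exists_valuation_sub_lt_of_integer (K := K) (v := v) hyval'
    (Units.mk0 _ hsne)
  refine ⟨t, ?_⟩
  have heq : c - algebraMap R (v.adicCompletion K) t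
      = -((algebraMap K (v.adicCompletion K) y - c)
        + algebraMap K (v.adicCompletion K) (algebraMap R K t - y)) := by
    rw [IsScalarTower.algebraMap_apply R K (v.adicCompletion K), map_sub]
    ring
  rw [heq, Valuation.map_neg]
  refine lt_of_le_of_lt (Valuation.map_add Valued.v _ _) (max_lt hyc ?_)
  rw [hcoe, valuedAdicCompletion_eq_valuation']
  exact ht

theorem approx_integral (c : ∀ v : HeightOneSpectrum R, v.adicCompletionIntegers K) (s : R)
    (hs : s ≠ 0) :
    ∃ t : R, ∀ v : HeightOneSpectrum R,
      Valued.v ((c v : v.adicCompletion K) - algebraMap R (v.adicCompletion K) t)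
        ≤ v.intValuation s := by
  classical
  have hT : {v : HeightOneSpectrum R | v.intValuation s < 1}.Finite := by
    simp_rw [intValuation_lt_one_iff_dvd]
    apply Ideal.finite_factors
    simpa only [Submodule.zero_eq_bot, ne_eq, Ideal.span_singleton_eq_bot]
  set T := hT.toFinset with hTdef
  set m : HeightOneSpectrum R → ℕ :=
    fun v => (Associates.mk v.asIdeal).count (Associates.mk (Ideal.span {s})).factors with hm
  have hms : ∀ v : HeightOneSpectrum R,
      v.intValuation s = exp (-(m v : ℤ)) := fun v => by
    rw [intValuation_if_neg v hs]
  choose t0 ht0 using fun v : HeightOneSpectrum R =>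
    approx_in_completion R K v (c v) (c v).2 s hs
  have hinj : ∀ v w : HeightOneSpectrum R, v.asIdeal = w.asIdeal → v = w := by
    intro v w h
    cases v; cases w; simpa using h
  obtain ⟨t, htt⟩ := IsDedekindDomain.exists_forall_sub_mem_ideal (s := T)
    (fun v => v.asIdeal) m (fun v _ => v.prime)
    (fun v _ w _ hvw h => hvw (hinj v w h)) (fun v => t0 v)
  refine ⟨t, fun v => ?_⟩
  by_cases hv : v ∈ T
  · have h1 := le_of_lt (ht0 v)
    have h2 : t - t0 v ∈ v.asIdeal ^ (m v) := htt v hv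
    have h3 : v.intValuation (t - t0 v) ≤ exp (-(m v : ℤ)) :=
      (intValuation_le_pow_iff_mem v _ (m v)).mpr h2
    have heq : (c v : v.adicCompletion K) - algebraMap R (v.adicCompletion K) t
        = ((c v : v.adicCompletion K) - algebraMap R (v.adicCompletion K) (t0 v))
          - algebraMap R (v.adicCompletion K) (t - t0 v) := by
      rw [map_sub]; ring
    rw [heq]
    refine (Valuation.map_sub Valued.v _ _).trans (max_le h1 ?_)
    rw [valuedAdicCompletion_eq_valuation, valuation_of_algebraMap, hms v]
    exact h3
  · have hv1 : v.intValuation s = 1 := by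
      refine le_antisymm (v.intValuation_le_one s) (not_lt.mp ?_)
      intro h
      exact hv (hTdef ▸ hT.mem_toFinset.mpr h)
    rw [hv1]
    refine (Valuation.map_sub Valued.v _ _).trans (max_le (c v).2 ?_)
    rw [valuedAdicCompletion_eq_valuation, valuation_of_algebraMap]
    exact v.intValuation_le_one t

theorem denseRange_finiteAdele :
    DenseRange (algebraMap K (FiniteAdeleRing R K)) := by
  intro a
  rw [mem_closure_iff_nhds]
  intro U hU
  classical
  obtain ⟨r, hr0, hA⟩ : ∃ r : R, r ≠ 0 ∧ ∀ z : FiniteAdeleRing R K,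
      (∀ v, Valued.v (z v) ≤ v.intValuation r) → a + z ∈ U := by
    set ψ : (∀ v : HeightOneSpectrum R,
        ↥(v.adicCompletionIntegers K : Set (v.adicCompletion K))) → FiniteAdeleRing R K :=
      RestrictedProduct.structureMap _ _ Filter.cofinite with hψ
    have hψc : Continuous ψ := (RestrictedProduct.isEmbedding_structureMap).continuous
    set φ : (∀ v : HeightOneSpectrum R,
        ↥(v.adicCompletionIntegers K : Set (v.adicCompletion K))) → FiniteAdeleRing R K :=
      fun w => a + ψ w with hφ
    have hφc : Continuous φ := continuous_const.add hψc
    have h00 : ψ 0 = 0 := rfl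
    have hφ0 : φ 0 = a := by
      rw [hφ]
      simp only
      rw [h00, add_zero]
    have hW : φ ⁻¹' U ∈ nhds (0 : ∀ v : HeightOneSpectrum R,
        ↥(v.adicCompletionIntegers K : Set (v.adicCompletion K))) :=
      hφc.continuousAt.preimage_mem_nhds (by rw [hφ0]; exact hU)
    rw [nhds_pi, Filter.mem_pi] at hW
    obtain ⟨I, hI, t, ht, hIt⟩ := hW
    have hγ : ∀ v : HeightOneSpectrum R, ∃ N : ℕ,
        ∀ y : ↥(v.adicCompletionIntegers K : Set (v.adicCompletion K)),
          Valued.v (y : v.adicCompletion K) ≤ exp (-(N : ℤ)) → y ∈ t v := by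
      intro v
      obtain ⟨u, hu, hut⟩ := (mem_nhds_subtype _ _ _).mp (ht v)
      obtain ⟨γ, hγ⟩ := Valued.mem_nhds_zero.mp hu
      have hne : MonoidWithZeroHom.ValueGroup₀.embedding γ.1 ≠ 0 := by
        intro h
        apply γ.ne_zero
        apply MonoidWithZeroHom.ValueGroup₀.embedding_strictMono.injective
        rw [h, map_zero]
      obtain ⟨N, hN⟩ := exists_exp_neg_natCast_lt hne
      refine ⟨N, fun y hy => hut (hγ ?_)⟩
      show (Valued.v : Valuation (v.adicCompletion K) ℤᵐ⁰).restrict (y : v.adicCompletion K) < γ.1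
      rw [Valuation.restrict_lt_iff_lt_embedding]
      exact lt_of_le_of_lt hy hN
    choose N hN using hγ
    set J : Ideal R := ∏ v ∈ hI.toFinset, v.asIdeal ^ N v with hJ
    obtain ⟨r, hr⟩ := (IsPrincipalIdealRing.principal J).principal
    have hJr : J = Ideal.span {r} := hr
    have hJ0 : J ≠ ⊥ := by
      rw [hJ, ← Ideal.zero_eq_bot, Finset.prod_ne_zero_iff]
      intro v _
      exact pow_ne_zero _ (by rw [Ideal.zero_eq_bot]; exact v.ne_bot)
    have hr0 : r ≠ 0 := by
      rintro rfl
      apply hJ0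
      rw [hJr]
      exact Ideal.span_singleton_eq_bot.mpr rfl
    refine ⟨r, hr0, fun z hz => ?_⟩
    have hzint : ∀ v : HeightOneSpectrum R,
        z v ∈ (v.adicCompletionIntegers K : Set (v.adicCompletion K)) :=
      fun v => (hz v).trans (v.intValuation_le_one r)
    have hz' : φ (fun v => ⟨z v, hzint v⟩) = a + z := rfl
    rw [← hz']
    apply hIt
    intro v hv
    apply hN v
    refine (hz v).trans ?_
    have hdvd : v.asIdeal ^ N v ∣ Ideal.span {r} := by
      rw [← hJr, hJ]
      exact Finset.dvd_prod_of_mem _ (hI.mem_toFinset.mpr hv)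
    exact (intValuation_le_pow_iff_dvd v r (N v)).mpr hdvd
  have ha2 : ∀ᶠ v in Filter.cofinite, Valued.v (a v) ≤ 1 := a.2
  have hS := Filter.eventually_cofinite.mp ha2
  choose bb hbb0 hbb using fun v : HeightOneSpectrum R =>
    adicCompletion.mul_nonZeroDivisor_mem_adicCompletionIntegers v (a v)
  set b : R := ∏ v ∈ hS.toFinset, bb v with hbdef
  have hb0 : b ≠ 0 :=
    Finset.prod_ne_zero_iff.mpr (fun v _ => nonZeroDivisors.ne_zero (hbb0 v))
  have hchat : ∀ v : HeightOneSpectrum R,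
      a v * algebraMap R (v.adicCompletion K) b ∈ v.adicCompletionIntegers K := by
    intro v
    by_cases hv : v ∈ hS.toFinset
    · rw [hbdef, ← Finset.mul_prod_erase _ _ hv, map_mul, ← mul_assoc]
      exact mul_mem (hbb v) (coe_mem_adicCompletionIntegers (v := v) (K := K) _)
    · rw [Set.Finite.mem_toFinset, Set.mem_setOf_eq, not_not] at hv
      exact mul_mem hv (coe_mem_adicCompletionIntegers (v := v) (K := K) _)
  set chat : ∀ v : HeightOneSpectrum R, v.adicCompletionIntegers K :=
    fun v => ⟨_, hchat v⟩ with hchatdef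
  have hs : r * b ≠ 0 := mul_ne_zero hr0 hb0
  obtain ⟨t, ht⟩ := approx_integral R K chat (r * b) hs
  set x : K := algebraMap R K t / algebraMap R K b with hx
  have hzero : ∀ (v : HeightOneSpectrum R) (c : R), c ≠ 0 →
      algebraMap R (v.adicCompletion K) c ≠ 0 := by
    intro v c hc h
    apply hc
    rw [IsScalarTower.algebraMap_apply R K (v.adicCompletion K)] at h
    have h2 := (algebraMap K (v.adicCompletion K)).injective (h.trans (map_zero _).symm)
    exact (IsFractionRing.to_map_eq_zero_iff (K := K)).mp h2
  have key : ∀ v : HeightOneSpectrum R,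
      Valued.v ((algebraMap K (FiniteAdeleRing R K) x - a) v) ≤ v.intValuation r := by
    intro v
    have hbv : algebraMap R (v.adicCompletion K) b ≠ 0 := hzero v _ hb0
    have hav : (chat v : v.adicCompletion K) = a v * algebraMap R (v.adicCompletion K) b := rfl
    have hxv : (algebraMap K (FiniteAdeleRing R K) x - a) v
        = (algebraMap R (v.adicCompletion K) t - (chat v : v.adicCompletion K))
          / algebraMap R (v.adicCompletion K) b := by
      have h2 : algebraMap K (v.adicCompletion K) x
          = algebraMap R (v.adicCompletion K) t / algebraMap R (v.adicCompletion K) b := by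
        rw [hx, map_div₀, ← IsScalarTower.algebraMap_apply, ← IsScalarTower.algebraMap_apply]
      have h3 : (algebraMap K (FiniteAdeleRing R K) x - a) v
          = algebraMap K (v.adicCompletion K) x - a v := rfl
      rw [h3, h2, eq_div_iff hbv, sub_mul, div_mul_cancel₀ _ hbv, hav]
    rw [hxv, map_div₀]
    have hvb : Valued.v (algebraMap R (v.adicCompletion K) b) = v.intValuation b := by
      rw [valuedAdicCompletion_eq_valuation, valuation_of_algebraMap]
    have hbne : v.intValuation b ≠ 0 := v.intValuation_ne_zero _ hb0
    rw [hvb, div_le_iff₀ (zero_lt_iff.mpr hbne)]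
    have := ht v
    have heq : Valued.v (algebraMap R (v.adicCompletion K) t - (chat v : v.adicCompletion K))
        = Valued.v ((chat v : v.adicCompletion K) - algebraMap R (v.adicCompletion K) t) := by
      rw [← Valuation.map_neg, neg_sub]
    rw [heq]
    refine this.trans ?_
    rw [map_mul]
  refine ⟨algebraMap K (FiniteAdeleRing R K) x, ?_, x, rfl⟩
  simpa using hA _ key


end Aux

theorem stmt12 (R : Type*) [CommRing R] [IsDomain R] [IsPrincipalIdealRing R]
    (K : Type*) [Field K] [Algebra R K] [IsFractionRing R K] (n : ℕ) :
    DenseRange (fun x : Fin n → K =>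
      (fun i => algebraMap K (FiniteAdeleRing R K) (x i) : Fin n → FiniteAdeleRing R K)) := by
  have hrange : Set.range (fun x : Fin n → K =>
      (fun i => algebraMap K (FiniteAdeleRing R K) (x i) : Fin n → FiniteAdeleRing R K))
      = Set.univ.pi (fun _ : Fin n => Set.range (algebraMap K (FiniteAdeleRing R K))) := by
    ext y
    simp only [Set.mem_range, Set.mem_pi, Set.mem_univ, forall_true_left]
    constructor
    · rintro ⟨x, rfl⟩ i
      exact ⟨x i, rfl⟩
    · intro h
      choose x hx using h
      exact ⟨x, funext hx⟩
  rw [DenseRange, hrange]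
  exact dense_pi Set.univ (fun i _ => denseRange_finiteAdele R K)
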